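/- Let (X,r) be a square-free solution of finite order |X| = n with cyclic degree p, let G = G(X,r), and let K be a field. Then for every integer k ≥ 1, the power-sum element s_k = Σ_{x ∈ X} ι(x)^{kp} of the group algebra K[G] lies in the center of K[G]. -/

import Mathlib

/-- The left action `σ_x(y)`: first component of `r (x, y)`. -/
def sig {X : Type*} (r : X × X → X × X) (x y : X) : X := (r (x, y)).1

/-- The right action `τ_y(x)`: second component of `r (x, y)`. -/
def tau {X : Type*} (r : X × X → X × X) (y x : X) : X := (r (x, y)).2

/-- `r¹² = r × id`. -/
def r12 {X : Type*} (r : X × X → X × X) : X × X × X → X × X × X :=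
  fun t => ((r (t.1, t.2.1)).1, (r (t.1, t.2.1)).2, t.2.2)

/-- `r²³ = id × r`. -/
def r23 {X : Type*} (r : X × X → X × X) : X × X × X → X × X × X :=
  fun t => (t.1, (r (t.2.1, t.2.2)).1, (r (t.2.1, t.2.2)).2)

/-- The braid relation `r¹² ∘ r²³ ∘ r¹² = r²³ ∘ r¹² ∘ r²³`. -/
def IsBraided {X : Type*} (r : X × X → X × X) : Prop :=
  r12 r ∘ r23 r ∘ r12 r = r23 r ∘ r12 r ∘ r23 r

/-- Nondegeneracy: every `σ_x` and every `τ_y` is bijective. -/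
def Nondegenerate {X : Type*} (r : X × X → X × X) : Prop :=
  (∀ x, Function.Bijective (sig r x)) ∧ (∀ y, Function.Bijective (tau r y))

/-- The defining relators of the group `G(X,r)`:
`x · y · (σ_x(y) · τ_y(x))⁻¹` for all `x, y ∈ X`. -/
def ybRels {X : Type*} (r : X × X → X × X) : Set (FreeGroup X) :=
  { w | ∃ x y : X, w = FreeGroup.of x * FreeGroup.of y *
      (FreeGroup.of (sig r x y) * FreeGroup.of (tau r y x))⁻¹ }

/-- The group `G(X,r)` associated with `(X,r)`, presented by generators `X`
and relations `x y = σ_x(y) τ_y(x)`. -/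
abbrev YBGroup {X : Type*} (r : X × X → X × X) := PresentedGroup (ybRels r)

/-- The canonical map `ι : X → G(X,r)`. -/
def ybι {X : Type*} (r : X × X → X × X) : X → YBGroup r := PresentedGroup.of

/-!
In a square-free solution every `τ_y` is inverse to `σ_y` (`σ_y τ_y = id`), and the braid
relation gives the cyclic condition `σ_{τ_x y}(x) = σ_y(x)`. Pushing `ι(y)` through a power
of `ι(x)` with the defining relations therefore yields
`ι(y) ι(x)^m = ι(σ_y x)^m ι(τ_x^m y)`, and for `m` a multiple of the cyclic degree `τ_x^m = id`,
so `ι(y) ι(x)^m ι(y)⁻¹ = ι(σ_y x)^m`. Conjugation by a generator thus permutes the summands of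
`s_k` along `σ_y`, and the generators generate `G`.
-/

open Finset

theorem Commute.sum_right_of_perm {R ι : Type*} [NonUnitalNonAssocSemiring R] [Fintype ι]
    (e : Equiv.Perm ι) {a : R} {f : ι → R} (h : ∀ i, a * f i = f (e i) * a) :
    Commute a (∑ i, f i) := by
  change a * _ = _ * a
  rw [mul_sum, sum_mul]
  simp_rw [h]
  exact Equiv.sum_comp e (fun i => f i * a)

namespace MonoidAlgebra

variable {k G : Type*} [CommSemiring k] [Group G]

theorem commute_of_inv_left {g : G} {a : MonoidAlgebra k G} (h : Commute (of k G g) a) :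
    Commute (of k G g⁻¹) a := by
  have hunit : Commute (((of k G).toHomUnits g : (MonoidAlgebra k G)ˣ) : MonoidAlgebra k G) a := h
  have hinv := hunit.units_inv_left
  rwa [← map_inv, MonoidHom.coe_toHomUnits] at hinv

theorem mem_center_of_commute_of_closure_eq_top {S : Set G} (hS : Subgroup.closure S = ⊤)
    {a : MonoidAlgebra k G} (h : ∀ g ∈ S, Commute (of k G g) a) :
    a ∈ Subalgebra.center k (MonoidAlgebra k G) := by
  have hG (g : G) : Commute (of k G g) a := by
    refine Subgroup.closure_induction (p := fun g _ => Commute (of k G g) a) h ?_ ?_ ?_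
      (hS ▸ Subgroup.mem_top g)
    · simpa only [map_one] using Commute.one_left a
    · intro g g' _ _ hg hg'
      simpa only [map_mul] using hg.mul_left hg'
    · intro g _ hg
      exact commute_of_inv_left hg
  rw [Subalgebra.mem_center_iff]
  intro b
  induction b using MonoidAlgebra.induction_on with
  | of g => exact hG g
  | add b c hb hc => rw [add_mul, mul_add, hb, hc]
  | smul c b hb => rw [smul_mul_assoc, mul_smul_comm, hb]

end MonoidAlgebra

section SquareFree

variable {X : Type*} {r : X × X → X × X}

theorem sig_self (hsf : ∀ x : X, r (x, x) = (x, x)) (x : X) : sig r x x = x := by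
  simp [sig, hsf]

theorem sig_sig_tau_of_isBraided (hbr : IsBraided r) (x y z : X) :
    sig r (sig r x y) (sig r (tau r y x) z) = sig r x (sig r y z) := by
  simpa [r12, r23, sig, tau] using congrArg Prod.fst (congrFun hbr (x, y, z))

theorem sig_sig_tau_of_involutive (hinv : Function.Involutive r) (x y : X) :
    sig r (sig r x y) (tau r y x) = x :=
  congrArg Prod.fst (hinv (x, y))

theorem sig_tau (hσ : ∀ x, Function.Injective (sig r x)) (hinv : Function.Involutive r)
    (hbr : IsBraided r) (hsf : ∀ x : X, r (x, x) = (x, x)) (x y : X) :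
    sig r y (tau r y x) = x := by
  have h := sig_sig_tau_of_isBraided hbr x y (tau r y x)
  rw [sig_self hsf, sig_sig_tau_of_involutive hinv] at h
  apply hσ x
  rw [← h, sig_self hsf]

theorem sig_tau_eq_sig (hσ : ∀ x, Function.Injective (sig r x)) (hbr : IsBraided r)
    (hsf : ∀ x : X, r (x, x) = (x, x)) (x y : X) :
    sig r (tau r x y) x = sig r y x := by
  have h := sig_sig_tau_of_isBraided hbr y x x
  rw [sig_self hsf] at h
  apply hσ (sig r y x)
  rw [h, sig_self hsf]

theorem iterate_tau_eq_id (hσ : ∀ x, Function.Injective (sig r x))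
    (hinv : Function.Involutive r) (hbr : IsBraided r) (hsf : ∀ x : X, r (x, x) = (x, x))
    {m : ℕ} {x : X} (hm : (sig r x)^[m] = id) : (tau r x)^[m] = id := by
  funext y
  have h := (Function.LeftInverse.iterate (fun z => sig_tau hσ hinv hbr hsf z x) m) y
  rwa [hm, id_eq] at h

theorem ybι_mul_ybι (x y : X) :
    ybι r x * ybι r y = ybι r (sig r x y) * ybι r (tau r y x) :=
  PresentedGroup.mk_eq_mk_of_mul_inv_mem ⟨x, y, rfl⟩

theorem ybι_mul_ybι_pow (hσ : ∀ x, Function.Injective (sig r x)) (hbr : IsBraided r)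
    (hsf : ∀ x : X, r (x, x) = (x, x)) (m : ℕ) (x y : X) :
    ybι r y * ybι r x ^ m = ybι r (sig r y x) ^ m * ybι r ((tau r x)^[m] y) := by
  induction m generalizing y with
  | zero => simp
  | succ m ih =>
    rw [pow_succ', ← mul_assoc, ybι_mul_ybι y x, mul_assoc, ih (tau r x y),
      sig_tau_eq_sig hσ hbr hsf, ← mul_assoc, ← pow_succ', ← Function.iterate_succ_apply]

theorem ybι_mul_ybι_pow_of_iterate_sig_eq_id (hσ : ∀ x, Function.Injective (sig r x))
    (hinv : Function.Involutive r) (hbr : IsBraided r) (hsf : ∀ x : X, r (x, x) = (x, x))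
    {m : ℕ} {x : X} (hm : (sig r x)^[m] = id) (y : X) :
    ybι r y * ybι r x ^ m = ybι r (sig r y x) ^ m * ybι r y := by
  rw [ybι_mul_ybι_pow hσ hbr hsf, iterate_tau_eq_id hσ hinv hbr hsf hm, id_eq]

end SquareFree

theorem power_sums_central_general {X : Type*} [Fintype X] (r : X × X → X × X)
    (hnd : Nondegenerate r) (hinv : Function.Involutive r) (hbr : IsBraided r)
    (hsf : ∀ x : X, r (x, x) = (x, x)) (p : ℕ)
    (hpord : ∀ x : X, (sig r x)^[p] = id)
    (K : Type*) [Field K] :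
    ∀ k : ℕ, 1 ≤ k →
      (∑ x : X, MonoidAlgebra.of K (YBGroup r) (ybι r x ^ (k * p)))
        ∈ Subalgebra.center K (MonoidAlgebra K (YBGroup r)) := by
  intro k _
  have hσ (x : X) : Function.Injective (sig r x) := (hnd.1 x).injective
  have hkp (x : X) : (sig r x)^[k * p] = id := by
    rw [mul_comm, Function.iterate_mul, hpord, Function.iterate_id]
  apply MonoidAlgebra.mem_center_of_commute_of_closure_eq_top
    (PresentedGroup.closure_range_of (ybRels r))
  rintro _ ⟨y, rfl⟩
  refine Commute.sum_right_of_perm (Equiv.ofBijective _ (hnd.1 y)) fun x => ?_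
  rw [← map_mul, ← map_mul]
  exact congrArg _ (ybι_mul_ybι_pow_of_iterate_sig_eq_id hσ hinv hbr hsf (hkp x) y)

/-- For a finite square-free solution `(X,r)` of order `n`
with cyclic degree `p` and a field `K`, every power-sum element
`s_k = Σ_{x ∈ X} ι(x)^{kp}` (`k ≥ 1`) lies in the center of the group algebra
`K[G(X,r)]`. -/
theorem power_sums_central {X : Type*} [Fintype X] (r : X × X → X × X)
    (hnd : Nondegenerate r) (hinv : Function.Involutive r) (hbr : IsBraided r)
    (hsf : ∀ x : X, r (x, x) = (x, x)) (p : ℕ) (hp : 0 < p)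
    (hpord : ∀ x : X, (sig r x)^[p] = id)
    (hpmin : ∀ q : ℕ, 0 < q → (∀ x : X, (sig r x)^[q] = id) → p ≤ q)
    (K : Type*) [Field K] :
    ∀ k : ℕ, 1 ≤ k →
      (∑ x : X, MonoidAlgebra.of K (YBGroup r) (ybι r x ^ (k * p)))
        ∈ Subalgebra.center K (MonoidAlgebra K (YBGroup r)) :=
  power_sums_central_general r hnd hinv hbr hsf p hpord K
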